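/- arXiv:2504.11960 — 7 statements merged into one kernel-verified Lean document; each statement's English description precedes it below -/
import Mathlib

section
/- Let K be a field, G a finite group, and θ: G → Aut(K) an injective group homomorphism. Then the skew group algebra K ∗_θ G is isomorphic, as an algebra over the fixed field k = {μ ∈ K : θ(g)(μ) = μ for all g ∈ G}, to the matrix algebra M_{|G|}(k) of |G| × |G| matrices over k. -/
open scoped BigOperators

/-- The skew group algebra `K ∗_θ G`: the `K`-vector space with basis `G` and
multiplication extending `g·λ = (θ g λ)·g`.  We realize it as functions `G → K`
(with `G` finite), where an element `Σ_g λ_g g` is the function `g ↦ λ_g`. -/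
def SkewGA (R : Type*) [CommRing R] (K : Type*) [Field K] [Algebra R K]
    (G : Type*) [Group G] [Fintype G] (θ : G →* (K ≃ₐ[R] K)) : Type _ :=
  G → K

namespace SkewGA

variable {R : Type*} [CommRing R] {K : Type*} [Field K] [Algebra R K]
variable {G : Type*} [Group G] [Fintype G] [DecidableEq G] (θ : G →* (K ≃ₐ[R] K))

instance : AddCommGroup (SkewGA R K G θ) := inferInstanceAs (AddCommGroup (G → K))

instance : Mul (SkewGA R K G θ) :=
  ⟨fun x y => (fun g => ∑ h : G, x h * θ h (y (h⁻¹ * g)) : G → K)⟩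

lemma mul_def (x y : SkewGA R K G θ) (g : G) :
    (x * y) g = ∑ h : G, x h * θ h (y (h⁻¹ * g)) := rfl

instance : One (SkewGA R K G θ) :=
  ⟨(fun g => if g = 1 then 1 else 0 : G → K)⟩

lemma one_def (g : G) : (1 : SkewGA R K G θ) g = if g = 1 then 1 else 0 := rfl

instance instRing : Ring (SkewGA R K G θ) where
  __ := (inferInstanceAs (AddCommGroup (G → K)) : AddCommGroup (G → K))
  left_distrib x y z := by
    funext g
    show ∑ h : G, x h * θ h (y (h⁻¹ * g) + z (h⁻¹ * g)) = _
    show _ = (∑ h : G, x h * θ h (y (h⁻¹ * g))) + ∑ h : G, x h * θ h (z (h⁻¹ * g))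
    rw [← Finset.sum_add_distrib]
    refine Finset.sum_congr rfl fun h _ => ?_
    rw [map_add, mul_add]
  right_distrib x y z := by
    funext g
    show ∑ h : G, (x h + y h) * θ h (z (h⁻¹ * g)) = _
    show _ = (∑ h : G, x h * θ h (z (h⁻¹ * g))) + ∑ h : G, y h * θ h (z (h⁻¹ * g))
    rw [← Finset.sum_add_distrib]
    refine Finset.sum_congr rfl fun h _ => ?_
    rw [add_mul]
  zero_mul x := by
    funext g
    show ∑ h : G, (0 : K) * θ h (x (h⁻¹ * g)) = 0
    simp
  mul_zero x := by
    funext g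
    show ∑ h : G, x h * θ h (0 : K) = 0
    simp
  mul_assoc x y z := by
    funext g
    show ∑ h : G, (∑ k : G, x k * θ k (y (k⁻¹ * h))) * θ h (z (h⁻¹ * g))
      = ∑ k : G, x k * θ k (∑ u : G, y u * θ u (z (u⁻¹ * (k⁻¹ * g))))
    simp only [Finset.sum_mul, map_sum, Finset.mul_sum, map_mul, AlgEquiv.mul_apply]
    rw [Finset.sum_comm]
    refine Finset.sum_congr rfl fun k _ => ?_
    rw [← Equiv.sum_comp (Equiv.mulLeft k) (fun h => x k * θ k (y (k⁻¹ * h)) * θ h (z (h⁻¹ * g)))]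
    refine Finset.sum_congr rfl fun u _ => ?_
    simp only [Equiv.coe_mulLeft, inv_mul_cancel_left, map_mul θ, AlgEquiv.mul_apply,
      mul_inv_rev, mul_assoc]
  one_mul x := by
    funext g
    show ∑ h : G, (if h = 1 then (1:K) else 0) * θ h (x (h⁻¹ * g)) = x g
    rw [Finset.sum_eq_single 1]
    · simp
    · intro h _ hh; simp [hh]
    · intro h; simp at h
  mul_one x := by
    funext g
    show ∑ h : G, x h * θ h (if h⁻¹ * g = 1 then (1:K) else 0) = x g
    rw [Finset.sum_eq_single g]
    · simp
    · intro h _ hh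
      rw [if_neg (by simp [inv_mul_eq_one, hh])]
      simp
    · intro h; simp at h

instance instAlgebra : Algebra R (SkewGA R K G θ) :=
  RingHom.toAlgebra'
    { toFun := fun c => (fun g => if g = 1 then algebraMap R K c else 0 : G → K)
      map_one' := by
        funext g
        show (if g = 1 then algebraMap R K (1 : R) else 0) = (if g = 1 then (1:K) else 0)
        rw [map_one]
      map_mul' := by
        intro c d
        funext g
        show (if g = 1 then algebraMap R K (c * d) else 0)
          = ∑ h : G, (if h = 1 then algebraMap R K c else 0) *
              θ h (if h⁻¹ * g = 1 then algebraMap R K d else 0)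
        rw [Finset.sum_eq_single 1]
        · simp [map_mul]
        · intro h _ hh; simp [hh]
        · intro h; simp at h
      map_zero' := by
        funext g
        show (if g = 1 then algebraMap R K (0 : R) else 0) = 0
        split <;> simp
      map_add' := by
        intro c d
        funext g
        show (if g = 1 then algebraMap R K (c + d) else 0)
          = (if g = 1 then algebraMap R K c else 0) + (if g = 1 then algebraMap R K d else 0)
        split <;> simp }
    (by
      intro c x
      funext g
      show ∑ h : G, (if h = 1 then algebraMap R K c else 0) * θ h (x (h⁻¹ * g))
        = ∑ h : G, x h * θ h (if h⁻¹ * g = 1 then algebraMap R K c else 0)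
      rw [Finset.sum_eq_single 1, Finset.sum_eq_single g]
      · simp [mul_comm]
      · intro h _ hh
        rw [if_neg (by simp [inv_mul_eq_one, hh])]
        simp
      · intro h; simp at h
      · intro h _ hh; simp [hh]
      · intro h; simp at h)

/-- The image of a scalar `λ ∈ K` in the skew group algebra (i.e. `λ·e`). -/
def ofK (lam : K) : SkewGA R K G θ := (fun g => if g = 1 then lam else 0 : G → K)

/-- The image of a group element `g₀ ∈ G` in the skew group algebra. -/
def ofG (g₀ : G) : SkewGA R K G θ := (fun g => if g = g₀ then 1 else 0 : G → K)

/-- The fixed field `k = {μ ∈ K ∣ ∀ g, θ g μ = μ}`. -/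
def fixedSubfield : Subfield K where
  carrier := {mu : K | ∀ g : G, θ g mu = mu}
  mul_mem' := by intro a b ha hb g; rw [map_mul, ha g, hb g]
  one_mem' := by intro g; rw [map_one]
  add_mem' := by intro a b ha hb g; rw [map_add, ha g, hb g]
  zero_mem' := by intro g; rw [map_zero]
  neg_mem' := by intro a ha g; rw [map_neg, ha g]
  inv_mem' := by intro a ha g; rw [map_inv₀, ha g]

/-- The skew group algebra is an algebra over the fixed field. -/
noncomputable instance instAlgebraFixed : Algebra (fixedSubfield θ) (SkewGA R K G θ) :=
  RingHom.toAlgebra'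
    { toFun := fun c => (fun g => if g = 1 then (c : K) else 0 : G → K)
      map_one' := rfl
      map_mul' := by
        intro c d
        funext g
        show (if g = 1 then ((c * d : fixedSubfield θ) : K) else 0)
          = ∑ h : G, (if h = 1 then (c : K) else 0) * θ h (if h⁻¹ * g = 1 then (d : K) else 0)
        rw [Finset.sum_eq_single 1]
        · simp
        · intro h _ hh; simp [hh]
        · intro h; simp at h
      map_zero' := by
        funext g
        show (if g = 1 then ((0 : fixedSubfield θ) : K) else 0) = 0
        split <;> simp
      map_add' := by
        intro c d
        funext g
        show (if g = 1 then ((c + d : fixedSubfield θ) : K) else 0)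
          = (if g = 1 then (c : K) else 0) + (if g = 1 then (d : K) else 0)
        split <;> simp }
    (by
      intro c x
      funext g
      show ∑ h : G, (if h = 1 then (c : K) else 0) * θ h (x (h⁻¹ * g))
        = ∑ h : G, x h * θ h (if h⁻¹ * g = 1 then (c : K) else 0)
      rw [Finset.sum_eq_single 1, Finset.sum_eq_single g]
      · have hc : θ g (c : K) = (c : K) := c.2 g
        simp [hc, mul_comm]
      · intro h _ hh
        rw [if_neg (by simp [inv_mul_eq_one, hh])]
        simp
      · intro h; simp at h
      · intro h _ hh; simp [hh]
      · intro h; simp at h)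

end SkewGA


section ArtinAux

open SkewGA

variable {K : Type*} [Field K] {G : Type*} [Group G] [Fintype G] [DecidableEq G]

/-- The action of `G` on `K` induced by `θ`. -/
def thetaAction (θ : G →* (K ≃ₐ[ℤ] K)) : MulSemiringAction G K where
  smul g μ := θ g μ
  one_smul μ := by show θ 1 μ = μ; simp
  mul_smul g h μ := by show θ (g * h) μ = θ g (θ h μ); simp
  smul_zero g := map_zero (θ g)
  smul_add g := map_add (θ g)
  smul_one g := map_one (θ g)
  smul_mul g := map_mul (θ g)

end ArtinAux

set_option maxHeartbeats 1000000 in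
open SkewGA in
/-- **Proposition 1.** Let `K` be a field, `G` a finite group, and
`θ : G → Aut(K)` an injective group homomorphism (ring automorphisms of `K` are exactly
`ℤ`-algebra automorphisms).  Then the skew group algebra `K ∗_θ G` is isomorphic, as an
algebra over the fixed field `k = {μ ∈ K ∣ ∀ g ∈ G, θ(g)(μ) = μ}`, to the matrix algebra
`M_{|G|}(k)`. -/
theorem skewGroupAlgebra_iso_matrix_of_injective
    (K : Type*) [Field K] (G : Type*) [Group G] [Fintype G] [DecidableEq G]
    (θ : G →* (K ≃ₐ[ℤ] K)) (hθ : Function.Injective θ) :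
    Nonempty (SkewGA ℤ K G θ ≃ₐ[fixedSubfield θ]
      Matrix (Fin (Fintype.card G)) (Fin (Fintype.card G)) (fixedSubfield θ)) := by
  classical
  letI := thetaAction θ
  haveI : FaithfulSMul G K := ⟨fun {g g'} h => hθ (AlgEquiv.ext h)⟩
  have hsub : FixedPoints.subfield G K = SkewGA.fixedSubfield θ := by
    ext x
    exact Iff.rfl
  have hfinrank : Module.finrank (fixedSubfield θ) K = Fintype.card G := by
    rw [← hsub]; exact FixedPoints.finrank_eq_card G K
  haveI hFD : FiniteDimensional (fixedSubfield θ) K :=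
    hsub ▸ (inferInstance : FiniteDimensional (FixedPoints.subfield G K) K)
  set k := fixedSubfield θ with hk
  -- the representation of the skew group algebra on K
  have hsmulK : ∀ (c : k) (μ : K), c • μ = (c : K) * μ := fun c μ => rfl
  let Φfun : SkewGA ℤ K G θ → Module.End k K := fun x =>
    { toFun := fun μ => ∑ g : G, x g * θ g μ
      map_add' := by
        intro μ ν
        rw [← Finset.sum_add_distrib]
        exact Finset.sum_congr rfl fun g _ => by rw [map_add, mul_add]
      map_smul' := by
        intro c μ
        simp only [RingHom.id_apply, hsmulK, Finset.mul_sum]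
        refine Finset.sum_congr rfl fun g _ => ?_
        rw [map_mul, (c.2 g : θ g (c : K) = c)]
        ring }
  have Φfun_apply : ∀ (x : SkewGA ℤ K G θ) (μ : K),
      Φfun x μ = ∑ g : G, x g * θ g μ := fun _ _ => rfl
  let Φ : SkewGA ℤ K G θ →ₐ[k] Module.End k K :=
    { toFun := Φfun
      map_one' := by
        refine LinearMap.ext fun μ => ?_
        rw [Φfun_apply]
        rw [Finset.sum_eq_single 1]
        · simp [SkewGA.one_def]
        · intro h _ hh; simp [SkewGA.one_def, hh]
        · intro h; simp at h
      map_mul' := by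
        intro x y
        refine LinearMap.ext fun μ => ?_
        show ∑ g : G, (x * y) g * θ g μ = Φfun x (Φfun y μ)
        simp only [Φfun_apply, SkewGA.mul_def, Finset.sum_mul, map_sum, Finset.mul_sum, map_mul]
        rw [Finset.sum_comm]
        refine Finset.sum_congr rfl fun h _ => ?_
        rw [← Equiv.sum_comp (Equiv.mulLeft h)
          (fun g => x h * θ h (y (h⁻¹ * g)) * θ g μ)]
        refine Finset.sum_congr rfl fun u _ => ?_
        simp only [Equiv.coe_mulLeft, inv_mul_cancel_left, map_mul θ, AlgEquiv.mul_apply,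
          mul_assoc]
      map_zero' := by
        refine LinearMap.ext fun μ => ?_
        rw [Φfun_apply]
        simp [show ∀ g : G, (0 : SkewGA ℤ K G θ) g = 0 from fun _ => rfl]
      map_add' := by
        intro x y
        refine LinearMap.ext fun μ => ?_
        show ∑ g : G, (x g + y g) * θ g μ = Φfun x μ + Φfun y μ
        simp only [Φfun_apply, ← Finset.sum_add_distrib, add_mul]
      commutes' := by
        intro c
        refine LinearMap.ext fun μ => ?_
        show Φfun (@id (SkewGA ℤ K G θ) (fun g => if g = 1 then (c : K) else 0)) μ = _
        rw [Φfun_apply, Module.algebraMap_end_apply, hsmulK]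
        rw [Finset.sum_eq_single 1]
        · simp [id]
        · intro h _ hh; simp [id, hh]
        · intro h; simp at h }
  -- injectivity, by Dedekind's linear independence of characters
  have hinj : Function.Injective Φ := by
    rw [injective_iff_map_eq_zero]
    intro x hx
    have hθinj : Function.Injective (fun g : G => ((θ g : K →+* K) : K →* K)) := by
      intro g g' h
      exact hθ (AlgEquiv.ext fun μ => DFunLike.ext_iff.1 h μ)
    have li := (linearIndependent_monoidHom K K).comp _ hθinj
    have h0 : ∀ μ : K, ∑ g : G, x g * θ g μ = 0 := fun μ => by
      have := LinearMap.congr_fun hx μ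
      simpa [Φ, Φfun_apply] using this
    have hall := Fintype.linearIndependent_iff.1 li x ?_
    · funext g; exact hall g
    · funext μ
      simpa [Function.comp, Finset.sum_apply, smul_eq_mul] using h0 μ
  -- dimension count
  let E : SkewGA ℤ K G θ ≃ₗ[k] (G → K) :=
    { toFun := id
      invFun := id
      left_inv := fun _ => rfl
      right_inv := fun _ => rfl
      map_add' := fun _ _ => rfl
      map_smul' := by
        intro c x
        funext g
        show ∑ h : G, (if h = 1 then (c : K) else 0) * θ h (x (h⁻¹ * g)) = (c : K) * x g
        rw [Finset.sum_eq_single 1]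
        · simp
        · intro h _ hh; simp [hh]
        · intro h; simp at h }
  haveI : FiniteDimensional k (G → K) := inferInstance
  letI : @Module k (SkewGA ℤ K G θ) DivisionRing.toDivisionSemiring.toSemiring
    (SkewGA.instAddCommGroup θ).toAddCommMonoid := Algebra.toModule
  haveI : FiniteDimensional k (SkewGA ℤ K G θ) := Module.Finite.equiv E.symm
  have hdim : Module.finrank k (SkewGA ℤ K G θ) = Module.finrank k (Module.End k K) := by
    rw [E.finrank_eq, Module.finrank_pi_fintype, Module.finrank_linearMap, hfinrank]
    simp [Finset.sum_const, mul_comm]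
  have hsurj : Function.Surjective Φ :=
    (LinearMap.injective_iff_surjective_of_finrank_eq_finrank (f := Φ.toLinearMap) hdim).1 hinj
  let e1 : SkewGA ℤ K G θ ≃ₐ[k] Module.End k K := AlgEquiv.ofBijective Φ ⟨hinj, hsurj⟩
  let b : Module.Basis (Fin (Module.finrank k K)) k K := Module.finBasis k K
  let e2 : Module.End k K ≃ₐ[k] Matrix (Fin (Module.finrank k K)) (Fin (Module.finrank k K)) k :=
    algEquivMatrix b
  let e3 := Matrix.reindexAlgEquiv k k (finCongr hfinrank)
  exact ⟨(e1.trans e2).trans e3⟩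
end

section
/- Let K be a field, G a finite group, and θ: G → Aut(K) an injective group homomorphism. Then the k-algebra homomorphism σ: K ∗_θ G → End_k(K) defined by σ(Σ_{g∈G} λ_g g) = Σ_{g∈G} λ_g θ(g) (where k is the fixed field of θ(G)) is an isomorphism of k-algebras; in particular it is injective and dim_k(K ∗_θ G) = |G|^2 = dim_k(End_k(K)). -/
open scoped BigOperators

open scoped BigOperators

section Aux
open SkewGA

variable {K : Type*} [Field K] {G : Type*} [Group G] [Fintype G] [DecidableEq G]
  (θ : G →* (K ≃ₐ[ℤ] K))

lemma skew_smul_apply (c : fixedSubfield θ) (x : SkewGA ℤ K G θ) (g : G) :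
    (c • x) g = (c : K) * x g := by
  show ∑ h : G, (if h = 1 then (c : K) else 0) * θ h (x (h⁻¹ * g)) = (c : K) * x g
  rw [Finset.sum_eq_single 1]
  · simp
  · intro h _ hh; simp [hh]
  · intro h; simp at h

/-- σ(x) as a k-linear endomorphism of K. -/
def sigmaFun (x : SkewGA ℤ K G θ) : Module.End (fixedSubfield θ) K where
  toFun μ := ∑ g : G, x g * θ g μ
  map_add' μ ν := by
    simp [mul_add, Finset.sum_add_distrib]
  map_smul' c μ := by
    show ∑ g : G, x g * θ g ((c : K) * μ) = (c : K) * ∑ g : G, x g * θ g μ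
    rw [Finset.mul_sum]
    refine Finset.sum_congr rfl fun g _ => ?_
    rw [map_mul, c.2 g, mul_left_comm]

lemma sigmaFun_apply (x : SkewGA ℤ K G θ) (μ : K) :
    sigmaFun θ x μ = ∑ g : G, x g * θ g μ := rfl

/-- The algebra homomorphism σ. -/
def sigma : SkewGA ℤ K G θ →ₐ[fixedSubfield θ] Module.End (fixedSubfield θ) K where
  toFun := sigmaFun θ
  map_one' := by
    refine LinearMap.ext fun μ => ?_
    show ∑ g : G, (if g = 1 then (1:K) else 0) * θ g μ = μ
    rw [Finset.sum_eq_single 1]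
    · simp
    · intro h _ hh; simp [hh]
    · intro h; simp at h
  map_mul' x y := by
    refine LinearMap.ext fun μ => ?_
    show ∑ g : G, (∑ h : G, x h * θ h (y (h⁻¹ * g))) * θ g μ
      = ∑ h : G, x h * θ h (∑ u : G, y u * θ u μ)
    simp only [Finset.sum_mul, map_sum, Finset.mul_sum, map_mul]
    rw [Finset.sum_comm]
    refine Finset.sum_congr rfl fun h _ => ?_
    rw [← Equiv.sum_comp (Equiv.mulLeft h) (fun g => x h * θ h (y (h⁻¹ * g)) * θ g μ)]
    refine Finset.sum_congr rfl fun u _ => ?_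
    simp only [Equiv.coe_mulLeft, inv_mul_cancel_left, map_mul θ, AlgEquiv.mul_apply, mul_assoc]
  map_zero' := by
    refine LinearMap.ext fun μ => ?_
    show ∑ g : G, (0:K) * θ g μ = 0
    simp
  map_add' x y := by
    refine LinearMap.ext fun μ => ?_
    show ∑ g : G, (x g + y g) * θ g μ = (∑ g : G, x g * θ g μ) + ∑ g : G, y g * θ g μ
    rw [← Finset.sum_add_distrib]
    exact Finset.sum_congr rfl fun g _ => add_mul _ _ _
  commutes' c := by
    refine LinearMap.ext fun μ => ?_
    rw [Module.algebraMap_end_apply]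
    show ∑ g : G, (if g = 1 then (c : K) else 0) * θ g μ = c • μ
    rw [Finset.sum_eq_single 1]
    · show (if (1:G) = 1 then (c:K) else 0) * θ 1 μ = (c : K) * μ
      simp
    · intro h _ hh; simp [hh]
    · intro h; simp at h

lemma sigma_injective (hθ : Function.Injective θ) : Function.Injective (sigma θ) := by
  rw [injective_iff_map_eq_zero]
  intro x hx
  have hinj : Function.Injective (fun g : G => ((θ g : K →+* K) : K →* K)) := by
    intro g₁ g₂ h
    apply hθ
    ext μ
    exact DFunLike.congr_fun h μ
  have li : LinearIndependent K (fun g : G => ((((θ g : K →+* K) : K →* K) : K → K))) :=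
    (linearIndependent_monoidHom K K).comp _ hinj
  have h0 : ∑ g : G, x g • (((θ g : K →+* K) : K →* K) : K → K) = 0 := by
    funext μ
    have hx' : sigmaFun θ x μ = 0 := DFunLike.congr_fun hx μ
    simp only [Finset.sum_apply, Pi.smul_apply, smul_eq_mul, Pi.zero_apply]
    simpa [sigmaFun_apply] using hx'
  funext g
  exact Fintype.linearIndependent_iff.mp li x h0 g

end Aux
set_option maxHeartbeats 1000000 in
open SkewGA in
/-- Let `K` be a field, `G` a finite group, and `θ : G → Aut(K)` an
injective group homomorphism, with fixed field `k`.  The `k`-algebra homomorphism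
`σ : K ∗_θ G → End_k(K)`, `Σ λ_g g ↦ Σ λ_g θ(g)`, is an isomorphism of `k`-algebras;
in particular it is injective and
`dim_k (K ∗_θ G) = |G|² = dim_k (End_k K)`. -/
theorem skewGroupAlgebra_sigma_iso_end
    (K : Type*) [Field K] (G : Type*) [Group G] [Fintype G] [DecidableEq G]
    (θ : G →* (K ≃ₐ[ℤ] K)) (hθ : Function.Injective θ) :
    (∃ σ : SkewGA ℤ K G θ ≃ₐ[fixedSubfield θ] Module.End (fixedSubfield θ) K,
      ∀ (x : SkewGA ℤ K G θ) (μ : K), σ x μ = ∑ g : G, x g * θ g μ) ∧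
    Module.finrank (fixedSubfield θ) (SkewGA ℤ K G θ) = Fintype.card G ^ 2 ∧
    Module.finrank (fixedSubfield θ) (Module.End (fixedSubfield θ) K) =
      Fintype.card G ^ 2 := by
  classical
  letI act : MulSemiringAction G K :=
    { smul := fun g μ => θ g μ
      one_smul := fun μ => by show θ 1 μ = μ; simp
      mul_smul := fun g h μ => by show θ (g * h) μ = θ g (θ h μ); rw [map_mul]; rfl
      smul_zero := fun g => map_zero (θ g)
      smul_add := fun g => map_add (θ g)
      smul_one := fun g => map_one (θ g)
      smul_mul := fun g => map_mul (θ g) }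
  haveI : FaithfulSMul G K := ⟨fun {g₁ g₂} h => hθ (AlgEquiv.ext h)⟩
  have hsub : FixedPoints.subfield G K = fixedSubfield θ := SetLike.ext fun x => Iff.rfl
  have hKk : Module.finrank (fixedSubfield θ) K = Fintype.card G := by
    rw [← hsub]; exact FixedPoints.finrank_eq_card G K
  haveI hfd : FiniteDimensional (fixedSubfield θ) K := by
    rw [← hsub]; infer_instance
  let e : SkewGA ℤ K G θ ≃ₗ[fixedSubfield θ] (G → K) :=
    { toFun := fun x => x
      invFun := fun x => x
      map_add' := fun _ _ => rfl
      map_smul' := fun c x => funext fun g => skew_smul_apply θ c x g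
      left_inv := fun _ => rfl
      right_inv := fun _ => rfl }
  haveI : Module.Finite (fixedSubfield θ) (SkewGA ℤ K G θ) := Module.Finite.equiv e.symm
  have hdim1 : Module.finrank (fixedSubfield θ) (SkewGA ℤ K G θ) = Fintype.card G ^ 2 := by
    rw [e.finrank_eq, Module.finrank_pi_fintype, sq]
    simp [hKk]
  have hdim2 : Module.finrank (fixedSubfield θ) (Module.End (fixedSubfield θ) K) =
      Fintype.card G ^ 2 := by
    rw [Module.finrank_linearMap, hKk, sq]
  have hinj := sigma_injective θ hθ
  have hsurj : Function.Surjective (sigma θ) :=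
    letI iG : AddCommGroup (SkewGA ℤ K G θ) := (instRing θ).toAddCommGroup
    haveI : @FiniteDimensional (fixedSubfield θ) (SkewGA ℤ K G θ) _ iG Algebra.toModule :=
      Module.Finite.equiv (LinearEquiv.refl _ (SkewGA ℤ K G θ))
    (LinearMap.injective_iff_surjective_of_finrank_eq_finrank
      (f := (sigma θ).toLinearMap) (hdim1.trans hdim2.symm)).mp hinj
  exact ⟨⟨AlgEquiv.ofBijective (sigma θ) ⟨hinj, hsurj⟩, fun x μ => rfl⟩, hdim1, hdim2⟩
end

section
/- Let K be a field, G = H₁ × H₂ a finite group, and θ: G → Aut(K) a group homomorphism whose restriction to {e} × H₂ is trivial and whose restriction θ̃ to H₁ × {e} is injective. Then K ∗_θ G ≅ (K ∗_{θ̃} H₁) H₂ ≅ M_{|H₁|}(k H₂), where k = {μ ∈ K : θ̃(h)(μ) = μ for all h ∈ H₁} is the fixed field of θ(H₁) and kH₂ is the group algebra of H₂ over k. -/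
open scoped BigOperators

lemma ma_mul_apply {A G : Type*} [Semiring A] [Group G] [Fintype G] [DecidableEq G]
    (f g : MonoidAlgebra A G) (x : G) :
    (f * g).coeff x = ∑ a : G, f.coeff a * g.coeff (a⁻¹ * x) := by
  rw [MonoidAlgebra.coeff_mul, Finsupp.sum_fintype]
  · refine Finset.sum_congr rfl fun a _ => ?_
    rw [Finsupp.sum_fintype]
    · rw [Finset.sum_eq_single (a⁻¹ * x)]
      · simp
      · intro b _ hb
        rw [if_neg fun h => hb (by rw [← h, inv_mul_cancel_left])]
      · intro h; exact absurd (Finset.mem_univ _) h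
    · intro b; simp
  · intro a; simp

noncomputable def maRingHomCongr {A B : Type*} [Semiring A] [Semiring B] {G : Type*} [Monoid G]
    (f : A →+* B) : MonoidAlgebra A G →+* MonoidAlgebra B G :=
  MonoidAlgebra.liftNCRingHom (MonoidAlgebra.singleOneRingHom.comp f) (MonoidAlgebra.of B G)
    (fun x y => by
      have h1 : (MonoidAlgebra.singleOneRingHom.comp f) x
          = MonoidAlgebra.single (1 : G) (f x) := rfl
      have h2 : (MonoidAlgebra.of B G) y = MonoidAlgebra.single y (1 : B) := rfl
      rw [Commute, SemiconjBy, h1, h2, MonoidAlgebra.single_mul_single,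
        MonoidAlgebra.single_mul_single]
      simp)

lemma maRingHomCongr_single {A B : Type*} [Semiring A] [Semiring B] {G : Type*} [Monoid G]
    (f : A →+* B) (g : G) (a : A) :
    maRingHomCongr f (MonoidAlgebra.single g a) = MonoidAlgebra.single g (f a) := by
  have : maRingHomCongr f (MonoidAlgebra.single g a)
      = MonoidAlgebra.single (1:G) (f a) * MonoidAlgebra.single g (1:B) :=
    MonoidAlgebra.liftNC_single _ _ _ _
  rw [this, MonoidAlgebra.single_mul_single, one_mul, mul_one]

noncomputable def maCongr {A B : Type*} [Semiring A] [Semiring B] {G : Type*} [Monoid G]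
    (e : A ≃+* B) : MonoidAlgebra A G ≃+* MonoidAlgebra B G :=
  RingEquiv.ofRingHom (maRingHomCongr (G := G) e.toRingHom) (maRingHomCongr e.symm.toRingHom)
    (by
      refine MonoidAlgebra.ringHom_ext (fun b => ?_) (fun a => ?_) <;>
        simp [maRingHomCongr_single, MonoidAlgebra.of_apply])
    (by
      refine MonoidAlgebra.ringHom_ext (fun b => ?_) (fun a => ?_) <;>
        simp [maRingHomCongr_single, MonoidAlgebra.of_apply])

noncomputable def matUnzip (R : Type*) [Ring R] (n : Type*) [Fintype n] [DecidableEq n]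
    (G : Type*) [Group G] [Fintype G] [DecidableEq G]
    (f : MonoidAlgebra (Matrix n n R) G) : Matrix n n (MonoidAlgebra R G) :=
  Matrix.of fun i j => MonoidAlgebra.ofCoeff (Finsupp.equivFunOnFinite.symm fun h => f.coeff h i j)

lemma matUnzip_apply {R : Type*} [Ring R] {n : Type*} [Fintype n] [DecidableEq n]
    {G : Type*} [Group G] [Fintype G] [DecidableEq G]
    (f : MonoidAlgebra (Matrix n n R) G) (i j : n) (h : G) :
    (matUnzip R n G f i j).coeff h = f.coeff h i j := rfl

noncomputable def matrixMACongr (R : Type*) [Ring R] (n : Type*) [Fintype n] [DecidableEq n]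
    (G : Type*) [Group G] [Fintype G] [DecidableEq G] :
    MonoidAlgebra (Matrix n n R) G ≃+* Matrix n n (MonoidAlgebra R G) where
  toFun := matUnzip R n G
  invFun M := MonoidAlgebra.ofCoeff (Finsupp.equivFunOnFinite.symm fun h => Matrix.of fun i j => (M i j).coeff h)
  left_inv f := by
    refine MonoidAlgebra.ext (Finsupp.ext fun h => ?_)
    refine Matrix.ext fun i j => ?_
    simp [matUnzip]
  right_inv M := by
    refine Matrix.ext fun i j => MonoidAlgebra.ext (Finsupp.ext fun h => ?_)
    simp [matUnzip]
  map_add' f g := by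
    refine Matrix.ext fun i j => MonoidAlgebra.ext (Finsupp.ext fun h => ?_)
    rfl
  map_mul' f g := by
    refine Matrix.ext fun i j => MonoidAlgebra.ext (Finsupp.ext fun h => ?_)
    rw [matUnzip_apply, ma_mul_apply, Matrix.sum_apply]
    show _ = ((matUnzip R n G f * matUnzip R n G g) i j).coeff h
    rw [Matrix.mul_apply, MonoidAlgebra.coeff_sum, Finsupp.finset_sum_apply]
    simp_rw [Matrix.mul_apply, ma_mul_apply, matUnzip_apply]
    exact Finset.sum_comm

section IsoA
open SkewGA

variable (K : Type*) [Field K]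
variable (H₁ : Type*) [Group H₁] [Fintype H₁] [DecidableEq H₁]
variable (H₂ : Type*) [Group H₂] [Fintype H₂] [DecidableEq H₂]

lemma skew_sum_apply {R K' G : Type*} [CommRing R] [Field K'] [Algebra R K'] [Group G]
    [Fintype G] (θ : G →* (K' ≃ₐ[R] K')) {ι : Type*} (s : Finset ι)
    (f : ι → SkewGA R K' G θ) (g : G) :
    (∑ i ∈ s, f i) g = ∑ i ∈ s, f i g :=
  map_sum (⟨⟨fun x : SkewGA R K' G θ => x g, rfl⟩, fun _ _ => rfl⟩ : SkewGA R K' G θ →+ K') f s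

variable (θ : (H₁ × H₂) →* (K ≃ₐ[ℤ] K))

noncomputable def unzipA (x : SkewGA ℤ K (H₁ × H₂) θ) :
    MonoidAlgebra (SkewGA ℤ K H₁ (θ.comp (MonoidHom.inl H₁ H₂))) H₂ :=
  MonoidAlgebra.ofCoeff (Finsupp.equivFunOnFinite.symm fun h₂ =>
    (fun h₁ => x (h₁, h₂) : SkewGA ℤ K H₁ (θ.comp (MonoidHom.inl H₁ H₂))))

lemma unzipA_apply (x : SkewGA ℤ K (H₁ × H₂) θ) (h₂ : H₂) (h₁ : H₁) :
    (unzipA K H₁ H₂ θ x).coeff h₂ h₁ = x (h₁, h₂) := rfl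

noncomputable def isoA (htriv : ∀ h₂ : H₂, θ (1, h₂) = 1) :
    SkewGA ℤ K (H₁ × H₂) θ ≃+*
      MonoidAlgebra (SkewGA ℤ K H₁ (θ.comp (MonoidHom.inl H₁ H₂))) H₂ where
  toFun := unzipA K H₁ H₂ θ
  invFun f := (fun p => f.coeff p.2 p.1 : SkewGA ℤ K (H₁ × H₂) θ)
  left_inv x := rfl
  right_inv f := MonoidAlgebra.ext (Finsupp.ext fun _ => rfl)
  map_add' x y := MonoidAlgebra.ext (Finsupp.ext fun _ => rfl)
  map_mul' x y := by
    refine MonoidAlgebra.ext (Finsupp.ext fun h₂ => ?_)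
    funext h₁
    show (x * y) (h₁, h₂)
      = (unzipA K H₁ H₂ θ x * unzipA K H₁ H₂ θ y).coeff h₂ h₁
    rw [SkewGA.mul_def, ma_mul_apply]
    erw [skew_sum_apply]
    simp_rw [SkewGA.mul_def, unzipA_apply]
    rw [Fintype.sum_prod_type]
    rw [Finset.sum_comm]
    refine Finset.sum_congr rfl fun a _ => Finset.sum_congr rfl fun b _ => ?_
    have hp : ((b, a) : H₁ × H₂) = (b, 1) * (1, a) := by
      rw [Prod.mk_mul_mk, mul_one, one_mul]
    have hθ : θ (b, a) = (θ.comp (MonoidHom.inl H₁ H₂)) b := by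
      rw [hp, map_mul, htriv, mul_one]; rfl
    have hinv : ((b, a) : H₁ × H₂)⁻¹ * (h₁, h₂) = (b⁻¹ * h₁, a⁻¹ * h₂) := rfl
    rw [hθ, hinv]

end IsoA


section IsoB
open SkewGA Module

variable {K : Type*} [Field K]
variable {H : Type*} [Group H] [Fintype H] [DecidableEq H]

set_option maxHeartbeats 1000000 in
theorem isoB (θ' : H →* (K ≃ₐ[ℤ] K)) (hinj : Function.Injective θ') :
    Nonempty (SkewGA ℤ K H θ' ≃+*
      Matrix (Fin (Fintype.card H)) (Fin (Fintype.card H)) (fixedSubfield θ')) := by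
  classical
  letI act : MulSemiringAction H K :=
    { smul := fun g μ => θ' g μ
      one_smul := fun μ => by show θ' 1 μ = μ; rw [map_one]; rfl
      mul_smul := fun g h μ => by show θ' (g * h) μ = θ' g (θ' h μ); rw [map_mul]; rfl
      smul_zero := fun g => map_zero (θ' g)
      smul_add := fun g a b => map_add (θ' g) a b
      smul_one := fun g => map_one (θ' g)
      smul_mul := fun g a b => map_mul (θ' g) a b }
  haveI faith : FaithfulSMul H K :=
    ⟨fun {g₁ g₂} h => hinj (AlgEquiv.ext fun μ => h μ)⟩
  have hsub : fixedSubfield θ' = FixedPoints.subfield H K := by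
    ext x
    show (∀ g, θ' g x = x) ↔ x ∈ MulAction.fixedPoints H K
    rw [MulAction.mem_fixedPoints]
    rfl
  haveI hfd : FiniteDimensional (fixedSubfield θ') K := by
    rw [hsub]; infer_instance
  have hrank : finrank (fixedSubfield θ') K = Fintype.card H := by
    rw [hsub]; exact FixedPoints.finrank_eq_card H K
  set k := fixedSubfield θ' with hk
  -- the representation of the skew group algebra on K by k-linear maps
  have hsmul : ∀ (c : k) (x : SkewGA ℤ K H θ') (g : H), (c • x) g = (c : K) * x g := by
    intro c x g
    show (∑ h : H, (if h = 1 then (c : K) else 0) * θ' h (x (h⁻¹ * g))) = (c : K) * x g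
    rw [Finset.sum_eq_single 1]
    · simp
    · intro h _ hh; simp [hh]
    · intro h; simp at h
  have hkmul : ∀ (c : k) (μ : K), c • μ = (c : K) * μ := fun c μ => rfl
  let Φfun : SkewGA ℤ K H θ' → Module.End k K := fun x =>
    { toFun := fun μ => ∑ g : H, x g * θ' g μ
      map_add' := fun a b => by
        simp only [map_add, mul_add, Finset.sum_add_distrib]
      map_smul' := fun c μ => by
        simp only [RingHom.id_apply]
        rw [hkmul, hkmul, Finset.mul_sum]
        refine Finset.sum_congr rfl fun g _ => ?_
        rw [map_mul, c.2 g, mul_left_comm]  }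
  have Φapp : ∀ (x : SkewGA ℤ K H θ') (μ : K), Φfun x μ = ∑ g : H, x g * θ' g μ :=
    fun _ _ => rfl
  have Φmul : ∀ x y, Φfun (x * y) = Φfun x * Φfun y := by
    intro x y
    refine LinearMap.ext fun μ => ?_
    rw [Module.End.mul_apply, Φapp, Φapp, Φapp]
    simp_rw [SkewGA.mul_def]
    simp only [Finset.sum_mul, map_sum, Finset.mul_sum, map_mul]
    rw [Finset.sum_comm]
    refine Finset.sum_congr rfl fun h _ => ?_
    rw [← Equiv.sum_comp (Equiv.mulLeft h)
      (fun g => x h * θ' h (y (h⁻¹ * g)) * θ' g μ)]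
    refine Finset.sum_congr rfl fun u _ => ?_
    simp only [Equiv.coe_mulLeft, inv_mul_cancel_left, map_mul θ', AlgEquiv.mul_apply,
      mul_assoc]
  have Φone : Φfun 1 = 1 := by
    refine LinearMap.ext fun μ => ?_
    rw [Φapp]
    show (∑ g : H, (if g = 1 then (1:K) else 0) * θ' g μ) = μ
    rw [Finset.sum_eq_single 1]
    · simp
    · intro h _ hh; simp [hh]
    · intro h; simp at h
  have Φadd : ∀ x y, Φfun (x + y) = Φfun x + Φfun y := by
    intro x y
    refine LinearMap.ext fun μ => ?_
    rw [LinearMap.add_apply, Φapp, Φapp, Φapp]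
    show (∑ g : H, (x g + y g) * θ' g μ) = _
    rw [← Finset.sum_add_distrib]
    exact Finset.sum_congr rfl fun g _ => add_mul _ _ _
  let Φ : SkewGA ℤ K H θ' →+* Module.End k K :=
    { toFun := Φfun, map_one' := Φone, map_mul' := Φmul
      map_zero' := by
        refine LinearMap.ext fun μ => ?_
        rw [Φapp]
        show (∑ g : H, (0:K) * θ' g μ) = 0
        simp
      map_add' := Φadd }
  -- injectivity via Dedekind's independence of characters
  have hker : ∀ x : SkewGA ℤ K H θ', Φfun x = 0 → x = 0 := by
    intro x hx
    have hm : Function.Injective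
        (fun g : H => ((θ' g : K ≃+* K) : K →+* K).toMonoidHom) := by
      intro a b hab
      exact hinj (AlgEquiv.ext fun μ => DFunLike.congr_fun hab μ)
    have li := (linearIndependent_monoidHom K K).comp _ hm
    rw [Fintype.linearIndependent_iff] at li
    have hsum : (∑ i : H, x i •
        ((fun f : K →* K => (f : K → K)) ∘
          fun g : H => ((θ' g : K ≃+* K) : K →+* K).toMonoidHom) i) = 0 := by
      funext μ
      have h1 : (∑ i : H, x i •
          ((fun f : K →* K => (f : K → K)) ∘
            fun g : H => ((θ' g : K ≃+* K) : K →+* K).toMonoidHom) i) μ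
          = ∑ i : H, x i * θ' i μ := by
        rw [Finset.sum_apply]
        exact Finset.sum_congr rfl fun i _ => rfl
      rw [h1, ← Φapp, hx]
      rfl
    funext g
    exact li x hsum g
  have hΦinj : Function.Injective Φ := (injective_iff_map_eq_zero Φ).mpr hker
  -- dimension count and surjectivity
  let ℓ : SkewGA ℤ K H θ' ≃ₗ[k] (H → K) :=
    { toFun := fun x => (x : H → K)
      invFun := fun x => (x : SkewGA ℤ K H θ')
      left_inv := fun _ => rfl
      right_inv := fun _ => rfl
      map_add' := fun _ _ => rfl
      map_smul' := fun c x => by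
        funext g
        rw [RingHom.id_apply]
        show (c • x) g = c • (x g)
        rw [hsmul, hkmul] }
  haveI : Module.Finite k (SkewGA ℤ K H θ') := Module.Finite.equiv ℓ.symm
  have hfr : finrank k (SkewGA ℤ K H θ') = finrank k (Module.End k K) := by
    rw [ℓ.finrank_eq, Module.finrank_pi_fintype, Module.finrank_linearMap, hrank]
    simp [Finset.sum_const, mul_comm]
  -- Φ as a k-linear map
  let Φₗ : SkewGA ℤ K H θ' →ₗ[k] Module.End k K :=
    { toFun := Φfun
      map_add' := Φadd
      map_smul' := fun c x => by
        rw [RingHom.id_apply]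
        refine LinearMap.ext fun μ => ?_
        rw [LinearMap.smul_apply, Φapp, Φapp, hkmul, Finset.mul_sum]
        refine Finset.sum_congr rfl fun g _ => ?_
        rw [hsmul, mul_assoc] }
  have hsurj : Function.Surjective Φₗ :=
    (@LinearMap.injective_iff_surjective_of_finrank_eq_finrank k (SkewGA ℤ K H θ') _ _
      (@Algebra.toModule k _ _ _ (SkewGA.instAlgebraFixed θ')) _ _ _ this _
      hfr Φₗ).mp hΦinj
  let e1 : SkewGA ℤ K H θ' ≃+* Module.End k K :=
    RingEquiv.ofBijective Φ ⟨hΦinj, hsurj⟩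
  let b : Basis (Fin (Fintype.card H)) k K := Module.finBasisOfFinrankEq k K hrank
  exact ⟨e1.trans (algEquivMatrix b).toRingEquiv⟩

end IsoB

set_option maxHeartbeats 1000000

open SkewGA in
/-- **Corollary 1.** Let `K` be a field, `G = H₁ × H₂` a finite group, and
`θ : G → Aut(K)` a homomorphism which is trivial on `{e} × H₂` and injective on
`H₁ × {e}` (with restriction `θ̃` to `H₁`).  Then
`K ∗_θ G ≅ (K ∗_{θ̃} H₁) H₂ ≅ (M_{|H₁|}(k)) H₂ ≅ M_{|H₁|}(k H₂)`,
where `k` is the fixed field of `θ̃(H₁)` and `kH₂` the group algebra of `H₂` over `k`. -/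
theorem skewGroupAlgebra_prod_iso
    (K : Type*) [Field K]
    (H₁ : Type*) [Group H₁] [Fintype H₁] [DecidableEq H₁]
    (H₂ : Type*) [Group H₂] [Fintype H₂] [DecidableEq H₂]
    (θ : (H₁ × H₂) →* (K ≃ₐ[ℤ] K))
    (htriv : ∀ h₂ : H₂, θ (1, h₂) = 1)
    (hinj : Function.Injective fun h₁ : H₁ => θ (h₁, 1)) :
    Nonempty (SkewGA ℤ K (H₁ × H₂) θ ≃+*
      MonoidAlgebra (SkewGA ℤ K H₁ (θ.comp (MonoidHom.inl H₁ H₂))) H₂) ∧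
    Nonempty (SkewGA ℤ K (H₁ × H₂) θ ≃+*
      MonoidAlgebra (Matrix (Fin (Fintype.card H₁)) (Fin (Fintype.card H₁))
        (fixedSubfield (θ.comp (MonoidHom.inl H₁ H₂)))) H₂) ∧
    Nonempty (SkewGA ℤ K (H₁ × H₂) θ ≃+*
      Matrix (Fin (Fintype.card H₁)) (Fin (Fintype.card H₁))
        (MonoidAlgebra (fixedSubfield (θ.comp (MonoidHom.inl H₁ H₂))) H₂)) := by
  have hinj' : Function.Injective ⇑(θ.comp (MonoidHom.inl H₁ H₂)) := hinj
  obtain ⟨eB⟩ := isoB (θ.comp (MonoidHom.inl H₁ H₂)) hinj'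
  let e1 := isoA K H₁ H₂ θ htriv
  let e2 := e1.trans (maCongr eB)
  let e3 := e2.trans (matrixMACongr
    (fixedSubfield (θ.comp (MonoidHom.inl H₁ H₂))) (Fin (Fintype.card H₁)) H₂)
  exact ⟨⟨e1⟩, ⟨e2⟩, ⟨e3⟩⟩
end

section
/- Let G be a finite group, H a subgroup, and let pr_H : F_qG → F_qH be the projection Σ_{g∈G} λ_g g ↦ Σ_{g∈H} λ_g g. Then for every left ideal C of F_qG, the image pr_H(C) is a left ideal of F_qH, and the exterior induced H-code of C (the intersection of all G-codes that are induced from H-codes and contain C) equals (pr_H(C))^G. -/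
open scoped Classical

/-- The natural embedding `F_qH → F_qG` for a subgroup `H ≤ G`. -/
noncomputable def embH {F : Type*} [Field F] {G : Type*} [Group G] (H : Subgroup G) :
    MonoidAlgebra F H →ₐ[F] MonoidAlgebra F G :=
  MonoidAlgebra.mapDomainAlgHom F F H.subtype

/-- The induced `G`-code `I^G = (F_qG)·I` of a left `H`-code `I ⊆ F_qH`. -/
noncomputable def inducedCode {F : Type*} [Field F] {G : Type*} [Group G] (H : Subgroup G)
    (I : Submodule (MonoidAlgebra F H) (MonoidAlgebra F H)) :
    Submodule (MonoidAlgebra F G) (MonoidAlgebra F G) :=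
  Submodule.span (MonoidAlgebra F G) (embH H '' I)

/-- The projection `pr_H : F_qG → F_qH`, `Σ_{g∈G} λ_g g ↦ Σ_{g∈H} λ_g g`. -/
noncomputable def prH {F : Type*} [Field F] {G : Type*} [Group G] (H : Subgroup G) :
    MonoidAlgebra F G →ₗ[F] MonoidAlgebra F H :=
  (MonoidAlgebra.coeffLinearEquiv F).symm.toLinearMap ∘ₗ
    Finsupp.lcomapDomain (Subtype.val : H → G) Subtype.val_injective ∘ₗ
    (MonoidAlgebra.coeffLinearEquiv F).toLinearMap

section Aux

variable {F : Type*} [Field F] {G : Type*} [Group G] (H : Subgroup G)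

lemma prH_apply (f : MonoidAlgebra F G) (x : H) : (prH H f).coeff x = f.coeff ↑x := rfl

lemma embH_apply (j : MonoidAlgebra F H) (x : G) :
    (embH H j).coeff x = if h : x ∈ H then j.coeff ⟨x, h⟩ else 0 := by
  show Finsupp.mapDomain _ j.coeff x = _
  split_ifs with h
  · exact Finsupp.mapDomain_apply Subtype.val_injective j.coeff ⟨x, h⟩
  · refine Finsupp.mapDomain_notin_range j.coeff x ?_
    rintro ⟨y, rfl⟩
    exact h y.2

lemma single_mul_embH_apply (g : G) (j : MonoidAlgebra F H) (x : G) :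
    (MonoidAlgebra.single g (1 : F) * embH H j).coeff x =
      if h : g⁻¹ * x ∈ H then j.coeff ⟨g⁻¹ * x, h⟩ else 0 := by
  rw [MonoidAlgebra.coeff_single_mul_apply, one_mul, embH_apply]

lemma prH_single_mul (g : G) (hg : g ∈ H) (f : MonoidAlgebra F G) :
    prH H (MonoidAlgebra.single g (1 : F) * f) =
      MonoidAlgebra.single (⟨g, hg⟩ : H) (1 : F) * prH H f := by
  ext x
  rw [prH_apply, MonoidAlgebra.coeff_single_mul_apply, MonoidAlgebra.coeff_single_mul_apply, prH_apply]
  rfl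

lemma prH_embH (j : MonoidAlgebra F H) : prH H (embH H j) = j := by
  ext x
  rw [prH_apply, embH_apply, dif_pos x.2]

lemma prH_single_mul_embH_not_mem (g : G) (hg : g ∉ H) (j : MonoidAlgebra F H) :
    prH H (MonoidAlgebra.single g (1 : F) * embH H j) = 0 := by
  ext x
  rw [prH_apply, single_mul_embH_apply, dif_neg, MonoidAlgebra.coeff_zero, Finsupp.zero_apply]
  intro h
  have hx : (↑x : G) * (g⁻¹ * ↑x)⁻¹ = g := by group
  exact hg (hx ▸ H.mul_mem x.2 (H.inv_mem h))

lemma smul_mem_of_mem {A : Type*} [Ring A] [Algebra F A]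
    (J : Submodule A A) (c : F) {y : A} (hy : y ∈ J) : c • y ∈ J := by
  have := J.smul_mem ((algebraMap F A) c) hy
  rwa [smul_eq_mul, ← Algebra.smul_def] at this

/-- the generating set of an induced code, as an `F`-span. -/
def genSet (J : Submodule (MonoidAlgebra F H) (MonoidAlgebra F H)) :
    Set (MonoidAlgebra F G) :=
  {x | ∃ g : G, ∃ j ∈ J, x = MonoidAlgebra.single g (1 : F) * embH H j}

lemma mul_mem_span_genSet (J : Submodule (MonoidAlgebra F H) (MonoidAlgebra F H)) :
    ∀ (r : MonoidAlgebra F G) (x : MonoidAlgebra F G),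
      x ∈ Submodule.span F (genSet H J) → r * x ∈ Submodule.span F (genSet H J) := by
  intro r
  induction r using MonoidAlgebra.induction_linear with
  | zero => intro x _; rw [show (0 : MonoidAlgebra F G) * x = 0 from zero_mul x]; exact zero_mem _
  | add f g hf hg => intro x hx; rw [add_mul]; exact add_mem (hf x hx) (hg x hx)
  | single a b =>
    intro x hx
    induction hx using Submodule.span_induction with
    | mem y hy =>
      obtain ⟨g, j, hj, rfl⟩ := hy
      have key : MonoidAlgebra.single a b * (MonoidAlgebra.single g (1 : F) * embH H j) =
          b • (MonoidAlgebra.single (a * g) (1 : F) * embH H j) := by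
        rw [← mul_assoc, MonoidAlgebra.single_mul_single, mul_one, ← smul_mul_assoc,
          MonoidAlgebra.smul_single', mul_one]
      rw [key]
      exact Submodule.smul_mem _ _ (Submodule.subset_span ⟨a * g, j, hj, rfl⟩)
    | zero => rw [mul_zero]; exact zero_mem _
    | add y z _ _ hy hz => rw [mul_add]; exact add_mem hy hz
    | smul c y _ hy => rw [mul_smul_comm]; exact Submodule.smul_mem _ _ hy

/-- the `F`-span of `genSet H J`, as a `F_qG`-submodule. -/
def bigSub (J : Submodule (MonoidAlgebra F H) (MonoidAlgebra F H)) :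
    Submodule (MonoidAlgebra F G) (MonoidAlgebra F G) where
  carrier := Submodule.span F (genSet H J)
  add_mem' := fun ha hb => add_mem ha hb
  zero_mem' := zero_mem _
  smul_mem' := fun r x hx => by
    rw [smul_eq_mul]; exact mul_mem_span_genSet H J r x hx

lemma inducedCode_le_span_genSet (J : Submodule (MonoidAlgebra F H) (MonoidAlgebra F H)) :
    ∀ x ∈ inducedCode H J, x ∈ Submodule.span F (genSet H J) := by
  have hle : inducedCode H J ≤ bigSub H J := by
    apply Submodule.span_le.2
    rintro _ ⟨j, hj, rfl⟩
    have h1 : embH H j = MonoidAlgebra.single (1 : G) (1 : F) * embH H j := by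
      rw [← MonoidAlgebra.one_def, one_mul]
    exact h1 ▸ Submodule.subset_span ⟨1, j, hj, rfl⟩
  exact fun x hx => hle hx

lemma prH_mem_of_mem_span_genSet (J : Submodule (MonoidAlgebra F H) (MonoidAlgebra F H)) :
    ∀ x ∈ Submodule.span F (genSet H J), prH H x ∈ J := by
  intro x hx
  induction hx using Submodule.span_induction with
  | mem y hy =>
    obtain ⟨g, j, hj, rfl⟩ := hy
    by_cases hg : g ∈ H
    · rw [prH_single_mul H g hg, prH_embH]
      have := J.smul_mem (MonoidAlgebra.single (⟨g, hg⟩ : H) (1 : F)) hj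
      rwa [smul_eq_mul] at this
    · rw [prH_single_mul_embH_not_mem H g hg]; exact zero_mem _
  | zero => rw [map_zero]; exact zero_mem _
  | add y z _ _ hy hz => rw [map_add]; exact add_mem hy hz
  | smul c y _ hy => rw [map_smul]; exact smul_mem_of_mem _ c hy

end Aux

/-- Let `G` be a finite group and `H` a subgroup.  For every left ideal
`C` of `F_qG`, the image `pr_H(C)` is a left ideal of `F_qH`, and the exterior induced
`H`-code of `C` — the intersection of all `G`-codes induced from `H`-codes that contain
`C` — equals `(pr_H(C))^G`. -/
theorem exterior_induced_code
    {F : Type*} [Field F] [Fintype F] {G : Type*} [Group G] [Fintype G] (H : Subgroup G)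
    (C : Submodule (MonoidAlgebra F G) (MonoidAlgebra F G)) :
    ∃ I : Submodule (MonoidAlgebra F H) (MonoidAlgebra F H),
      (I : Set (MonoidAlgebra F H)) = prH H '' (C : Set (MonoidAlgebra F G)) ∧
      inducedCode H I =
        sInf {D : Submodule (MonoidAlgebra F G) (MonoidAlgebra F G) |
          (∃ J : Submodule (MonoidAlgebra F H) (MonoidAlgebra F H), D = inducedCode H J) ∧
          C ≤ D} := by
  -- `prH H '' C` is closed under left multiplication by `F_qH`.
  have smul_closed : ∀ (r : MonoidAlgebra F H) (x : MonoidAlgebra F H),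
      x ∈ prH H '' (C : Set (MonoidAlgebra F G)) →
      r * x ∈ prH H '' (C : Set (MonoidAlgebra F G)) := by
    intro r
    induction r using MonoidAlgebra.induction_linear with
    | zero => intro x _; exact ⟨0, C.zero_mem, by rw [map_zero, zero_mul]⟩
    | add f g hf hg =>
      intro x hx
      obtain ⟨c1, hc1, h1⟩ := hf x hx
      obtain ⟨c2, hc2, h2⟩ := hg x hx
      exact ⟨c1 + c2, C.add_mem hc1 hc2, by rw [map_add, h1, h2, add_mul]⟩
    | single h b =>
      rintro _ ⟨c, hc, rfl⟩
      have h1 : MonoidAlgebra.single (↑h : G) (1 : F) * c ∈ C := by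
        have := C.smul_mem (MonoidAlgebra.single (↑h : G) (1 : F)) hc
        rwa [smul_eq_mul] at this
      refine ⟨b • (MonoidAlgebra.single (↑h : G) (1 : F) * c),
        smul_mem_of_mem C b h1, ?_⟩
      rw [map_smul, prH_single_mul H (↑h) h.2, ← smul_mul_assoc, MonoidAlgebra.smul_single',
        mul_one, Subtype.eta]
  refine ⟨⟨⟨⟨prH H '' (C : Set (MonoidAlgebra F G)),
      fun {a b} ⟨c1, hc1, h1⟩ ⟨c2, hc2, h2⟩ =>
        ⟨c1 + c2, C.add_mem hc1 hc2, by rw [map_add, h1, h2]⟩⟩,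
      ⟨0, C.zero_mem, map_zero _⟩⟩,
      fun {r x} hx => by rw [smul_eq_mul]; exact smul_closed r x hx⟩, rfl, ?_⟩
  set I : Submodule (MonoidAlgebra F H) (MonoidAlgebra F H) :=
    ⟨⟨⟨prH H '' (C : Set (MonoidAlgebra F G)), _⟩, _⟩, _⟩ with hI
  have hImem : ∀ {c : MonoidAlgebra F G}, c ∈ C → prH H c ∈ I := fun {c} hc => ⟨c, hc, rfl⟩
  -- `C ≤ inducedCode H I`, via the coset decomposition.
  have hCle : C ≤ inducedCode H I := by
    have := Fintype.ofFinite (G ⧸ H)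
    intro c hc
    have key : c = ∑ q : G ⧸ H,
        MonoidAlgebra.single q.out (1 : F) *
          embH H (prH H (MonoidAlgebra.single q.out⁻¹ (1 : F) * c)) := by
      ext x
      rw [MonoidAlgebra.coeff_sum, Finsupp.finset_sum_apply]
      have term : ∀ q : G ⧸ H,
          (MonoidAlgebra.single q.out (1 : F) *
            embH H (prH H (MonoidAlgebra.single q.out⁻¹ (1 : F) * c))).coeff x =
          if q = QuotientGroup.mk x then c.coeff x else 0 := by
        intro q
        rw [single_mul_embH_apply]
        by_cases hq : q = QuotientGroup.mk x
        · have hmem : q.out⁻¹ * x ∈ H := by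
            rw [← QuotientGroup.eq, QuotientGroup.out_eq']
            exact hq
          rw [dif_pos hmem, if_pos hq, prH_apply, MonoidAlgebra.coeff_single_mul_apply]
          simp
        · have hmem : ¬ q.out⁻¹ * x ∈ H := by
            rw [← QuotientGroup.eq, QuotientGroup.out_eq']
            exact hq
          rw [dif_neg hmem, if_neg hq]
      rw [Finset.sum_congr rfl fun q _ => term q, Finset.sum_ite_eq', if_pos (Finset.mem_univ _)]
    rw [key]
    refine Submodule.sum_mem _ fun q _ => ?_
    have hc' : MonoidAlgebra.single q.out⁻¹ (1 : F) * c ∈ C := by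
      have := C.smul_mem (MonoidAlgebra.single q.out⁻¹ (1 : F)) hc
      rwa [smul_eq_mul] at this
    have hgen : embH H (prH H (MonoidAlgebra.single q.out⁻¹ (1 : F) * c)) ∈ inducedCode H I :=
      Submodule.subset_span ⟨_, hImem hc', rfl⟩
    have := (inducedCode H I).smul_mem (MonoidAlgebra.single q.out (1 : F)) hgen
    rwa [smul_eq_mul] at this
  refine le_antisymm (le_sInf ?_) (sInf_le ⟨⟨I, rfl⟩, hCle⟩)
  rintro D ⟨⟨J, rfl⟩, hCD⟩
  refine Submodule.span_le.2 ?_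
  rintro _ ⟨i, hi, rfl⟩
  obtain ⟨c, hc, rfl⟩ := hi
  have h1 : c ∈ inducedCode H J := hCD hc
  have h2 : prH H c ∈ J :=
    prH_mem_of_mem_span_genSet H J c (inducedCode_le_span_genSet H J c h1)
  exact Submodule.subset_span ⟨prH H c, h2, rfl⟩
end

section
/- Let G be a finite group, H a subgroup, T a left transversal of H in G, and C a left ideal of F_qG. Then every codeword u ∈ C can be written as u = Σ_{g∈T} g·u_g with all u_g ∈ pr_H(C); consequently, the minimum distance of C satisfies d(C) ≥ d(pr_H(C)). -/
open scoped BigOperators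

/-- Minimum Hamming distance (in `ℕ∞`, `⊤` if there is no nonzero codeword) of a set of
codewords. -/
noncomputable def dmin {α M : Type*} [Zero M] (S : Set (α →₀ M)) : ℕ∞ :=
  sInf {w | ∃ u ∈ S, u ≠ 0 ∧ w = (u.support.card : ℕ∞)}

lemma prH_apply_s15 {F : Type*} [Field F] {G : Type*} [Group G] (H : Subgroup G)
    (v : MonoidAlgebra F G) (h : H) : (prH H v).coeff h = v.coeff (h : G) := rfl

lemma embH_apply_mem {F : Type*} [Field F] {G : Type*} [Group G] (H : Subgroup G)
    (x : MonoidAlgebra F H) (h : H) : (embH H x).coeff (h : G) = x.coeff h :=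
  Finsupp.mapDomain_apply Subtype.val_injective x.coeff h

lemma embH_apply_notmem {F : Type*} [Field F] {G : Type*} [Group G] (H : Subgroup G)
    (x : MonoidAlgebra F H) (g : G) (hg : g ∉ H) : (embH H x).coeff g = 0 := by
  exact Finsupp.mapDomain_notin_range _ _ (by simpa using hg)

lemma dmin_aux {F : Type*} [Field F] {G : Type*} [Group G] (H : Subgroup G)
    (C : Submodule (MonoidAlgebra F G) (MonoidAlgebra F G))
    (u : MonoidAlgebra F G) (hu : u ∈ C) (t₀ g : G) (hg : g ∈ u.coeff.support)
    (ht₀H : t₀⁻¹ * g ∈ H) :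
    ∃ x ∈ C, prH H x ≠ 0 ∧ (prH H x).coeff.support.card ≤ u.coeff.support.card := by
  have hvC : MonoidAlgebra.of F G t₀⁻¹ * u ∈ C := by
    simpa [smul_eq_mul] using C.smul_mem (MonoidAlgebra.of F G t₀⁻¹) hu
  have hvval : ∀ h : H, (prH H (MonoidAlgebra.of F G t₀⁻¹ * u)).coeff h = u.coeff (t₀ * (h : G)) := by
    intro h
    rw [prH_apply_s15, MonoidAlgebra.of_apply, MonoidAlgebra.coeff_single_mul_apply, inv_inv, one_mul]
  refine ⟨MonoidAlgebra.of F G t₀⁻¹ * u, hvC, ?_, ?_⟩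
  · intro h0
    have h1 := hvval ⟨t₀⁻¹ * g, ht₀H⟩
    rw [h0] at h1
    simp only [MonoidAlgebra.coeff_zero, Finsupp.zero_apply] at h1
    rw [← mul_assoc, mul_inv_cancel, one_mul] at h1
    exact Finsupp.mem_support_iff.mp hg h1.symm
  · apply Finset.card_le_card_of_injOn (fun x : H => t₀ * (x : G))
    · intro x hx
      rw [Finset.mem_coe, Finsupp.mem_support_iff] at hx ⊢
      rwa [hvval x] at hx
    · intro x _ y _ hxy
      exact Subtype.ext (mul_left_cancel hxy)

/-- Let `G` be a finite group, `H` a subgroup, `T` a left transversal of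
`H` in `G`, and `C` a left ideal of `F_qG`.  Then every `u ∈ C` can be written as
`u = Σ_{g∈T} g·u_g` with all `u_g ∈ pr_H(C)`; consequently `d(C) ≥ d(pr_H(C))`. -/
theorem codeword_decomposition_and_dmin
    {F : Type*} [Field F] [Fintype F] {G : Type*} [Group G] [Fintype G] (H : Subgroup G)
    (T : Finset G) (hT : ∀ g : G, ∃! t, t ∈ T ∧ t⁻¹ * g ∈ H)
    (C : Submodule (MonoidAlgebra F G) (MonoidAlgebra F G)) :
    (∀ u ∈ C, ∃ c : G → MonoidAlgebra F H,
      (∀ t ∈ T, c t ∈ prH H '' (C : Set (MonoidAlgebra F G))) ∧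
      u = ∑ t ∈ T, MonoidAlgebra.of F G t * embH H (c t)) ∧
    dmin (MonoidAlgebra.coeff '' (C : Set (MonoidAlgebra F G))) ≥
      dmin (MonoidAlgebra.coeff '' (prH H '' (C : Set (MonoidAlgebra F G)))) := by
  classical
  -- membership of the translated codewords
  have hmemC : ∀ u ∈ C, ∀ t : G, MonoidAlgebra.of F G t⁻¹ * u ∈ C := by
    intro u hu t
    simpa [smul_eq_mul] using C.smul_mem (MonoidAlgebra.of F G t⁻¹) hu
  -- pointwise value of the terms
  have hterm : ∀ (u : MonoidAlgebra F G) (t g : G),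
      (MonoidAlgebra.of F G t * embH H (prH H (MonoidAlgebra.of F G t⁻¹ * u))).coeff g
        = if h : t⁻¹ * g ∈ H then u.coeff g else 0 := by
    intro u t g
    have h1 : (MonoidAlgebra.of F G t * embH H (prH H (MonoidAlgebra.of F G t⁻¹ * u))).coeff g
        = (embH H (prH H (MonoidAlgebra.of F G t⁻¹ * u))).coeff (t⁻¹ * g) := by
      simpa using MonoidAlgebra.coeff_single_mul_apply (1 : F) t
        (embH H (prH H (MonoidAlgebra.of F G t⁻¹ * u))) g
    rw [h1]
    by_cases h : t⁻¹ * g ∈ H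
    · rw [dif_pos h]
      have h2 : (embH H (prH H (MonoidAlgebra.of F G t⁻¹ * u))).coeff ((⟨t⁻¹ * g, h⟩ : H) : G)
          = (prH H (MonoidAlgebra.of F G t⁻¹ * u)).coeff ⟨t⁻¹ * g, h⟩ := embH_apply_mem H _ _
      rw [show t⁻¹ * g = ((⟨t⁻¹ * g, h⟩ : H) : G) from rfl, h2, prH_apply_s15]
      have h3 : (MonoidAlgebra.of F G t⁻¹ * u).coeff (t⁻¹ * g) = u.coeff g := by
        simpa [mul_assoc] using MonoidAlgebra.coeff_single_mul_apply (1 : F) t⁻¹ u (t⁻¹ * g)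
      exact h3
    · rw [dif_neg h]
      exact embH_apply_notmem H _ _ h
  -- the decomposition
  have hdecomp : ∀ u : MonoidAlgebra F G,
      u = ∑ t ∈ T, MonoidAlgebra.of F G t * embH H (prH H (MonoidAlgebra.of F G t⁻¹ * u)) := by
    intro u
    apply MonoidAlgebra.coeff_injective
    ext g
    rw [MonoidAlgebra.coeff_sum, Finset.sum_apply']
    obtain ⟨t₀, ⟨ht₀T, ht₀H⟩, huniq⟩ := hT g
    rw [Finset.sum_eq_single t₀]
    · rw [hterm, dif_pos ht₀H]
    · intro t htT hne
      rw [hterm, dif_neg]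
      intro hH
      exact hne (huniq t ⟨htT, hH⟩)
    · intro h; exact absurd ht₀T h
  constructor
  · intro u hu
    refine ⟨fun t => prH H (MonoidAlgebra.of F G t⁻¹ * u), fun t _ =>
      ⟨MonoidAlgebra.of F G t⁻¹ * u, hmemC u hu t, rfl⟩, hdecomp u⟩
  · -- dmin inequality
    apply le_sInf
    rintro w ⟨_, ⟨u, huC, rfl⟩, hune, rfl⟩
    obtain ⟨g, hg⟩ := Finsupp.support_nonempty_iff.mpr hune
    obtain ⟨t₀, ⟨ht₀T, ht₀H⟩, _⟩ := hT g
    obtain ⟨x, hxC, hxne, hxcard⟩ := dmin_aux H C u huC t₀ g hg ht₀H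
    calc sInf {w | ∃ x ∈ MonoidAlgebra.coeff '' (prH H '' (C : Set (MonoidAlgebra F G))),
            x ≠ 0 ∧ w = (x.support.card : ℕ∞)}
        ≤ ((prH H x).coeff.support.card : ℕ∞) :=
          sInf_le ⟨(prH H x).coeff, ⟨prH H x, ⟨x, hxC, rfl⟩, rfl⟩,
            MonoidAlgebra.coeff_eq_zero.not.mpr hxne, rfl⟩
      _ ≤ (u.coeff.support.card : ℕ∞) := by exact_mod_cast hxcard
end

section
/- Let G be a finite group, H a subgroup, and C a left ideal of F_qG. Define C|_H = pr_H(C ∩ F_qH). Then C|_H is a left ideal of F_qH, and the interior induced H-code of C (the sum of all G-codes that are induced from H-codes and are contained in C) equals (C|_H)^G; that is, (C|_H)^G is the largest induced code contained in C. -/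
lemma prH_embH_s16 {F : Type*} [Field F] {G : Type*} [Group G] (H : Subgroup G)
    (x : MonoidAlgebra F H) : prH H (embH H x) = x := by
  show MonoidAlgebra.ofCoeff (Finsupp.comapDomain _ (Finsupp.mapDomain _ x.coeff) _) = x
  ext h
  rw [MonoidAlgebra.coeff_ofCoeff]
  exact Finsupp.mapDomain_apply Subtype.val_injective x.coeff h

/-- `embH⁻¹(C)` as a left ideal of `F_qH`. -/
noncomputable def restrictCode {F : Type*} [Field F] {G : Type*} [Group G] (H : Subgroup G)
    (C : Submodule (MonoidAlgebra F G) (MonoidAlgebra F G)) :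
    Submodule (MonoidAlgebra F H) (MonoidAlgebra F H) where
  carrier := embH H ⁻¹' C
  add_mem' hx hy := by simp only [Set.mem_preimage, map_add] at *; exact C.add_mem hx hy
  zero_mem' := by simp only [Set.mem_preimage, map_zero]; exact C.zero_mem
  smul_mem' r x hx := by
    simp only [Set.mem_preimage, smul_eq_mul, map_mul] at *
    exact C.smul_mem (embH H r) hx

/-- Let `G` be a finite group, `H` a subgroup and `C` a left ideal of
`F_qG`.  Define `C|_H = pr_H(C ∩ F_qH)` (where `F_qH` is identified with the subalgebra of
`F_qG` supported on `H`).  Then `C|_H` is a left ideal of `F_qH`, and the interior induced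
`H`-code of `C` — the sum of all `G`-codes induced from `H`-codes contained in `C` —
equals `(C|_H)^G`, i.e. `(C|_H)^G` is the largest induced code contained in `C`. -/
theorem interior_induced_code
    {F : Type*} [Field F] [Fintype F] {G : Type*} [Group G] [Fintype G] (H : Subgroup G)
    (C : Submodule (MonoidAlgebra F G) (MonoidAlgebra F G)) :
    ∃ I : Submodule (MonoidAlgebra F H) (MonoidAlgebra F H),
      (I : Set (MonoidAlgebra F H)) =
        prH H '' ((C : Set (MonoidAlgebra F G)) ∩ Set.range (embH H)) ∧
      inducedCode H I =
        sSup {D : Submodule (MonoidAlgebra F G) (MonoidAlgebra F G) |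
          (∃ J : Submodule (MonoidAlgebra F H) (MonoidAlgebra F H), D = inducedCode H J) ∧
          D ≤ C} := by
  refine ⟨restrictCode H C, ?_, ?_⟩
  · ext y
    constructor
    · intro hy
      exact ⟨embH H y, ⟨hy, ⟨y, rfl⟩⟩, prH_embH_s16 H y⟩
    · rintro ⟨z, ⟨hzC, x, rfl⟩, hz⟩
      have : y = x := by rw [← hz, prH_embH_s16]
      subst this
      exact hzC
  · have hsub : inducedCode H (restrictCode H C) ≤ C := by
      rw [inducedCode, Submodule.span_le]
      rintro _ ⟨x, hx, rfl⟩
      exact hx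
    apply le_antisymm
    · exact le_sSup ⟨⟨restrictCode H C, rfl⟩, hsub⟩
    · apply sSup_le
      rintro D ⟨⟨J, rfl⟩, hDC⟩
      apply Submodule.span_mono
      rintro _ ⟨x, hx, rfl⟩
      refine ⟨x, ?_, rfl⟩
      exact hDC (Submodule.subset_span ⟨x, hx, rfl⟩)
end

section
/- Let gcd(q,n) = 1 and r ≢ 1 (mod n) with r^m ≡ 1 (mod n). Let g(x) be a divisor of x^n − 1 over F_q and let C = (F_qA)·g(a) be the cyclic code it generates in F_qA. Then the induced metacyclic code C^{G_{n,m,r}} satisfies τ(C^{G_{n,m,r}}) = ⊕_{i=1}^ω I_{s_i}(L_i), where L_i = { (x^{(0)}, …, x^{(s_i−1)}) ∈ R_i^{s_i} : x^{(j)} = 0 for all j such that g(α_i^{r^j}) = 0 }. -/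
open scoped BigOperators

open Polynomial IntermediateField

/-- The defining relations of the split metacyclic group
`G_{n,m,r} = ⟨a, b ∣ aⁿ = bᵐ = e, b a = aʳ b⟩`. -/
def metacyclicRels (n m r : ℕ) : Set (FreeGroup (Fin 2)) :=
  {FreeGroup.of 0 ^ n, FreeGroup.of 1 ^ m,
    FreeGroup.of 1 * FreeGroup.of 0 * (FreeGroup.of 0 ^ r * FreeGroup.of 1)⁻¹}

/-- The split metacyclic group `G_{n,m,r}`. -/
def Metacyclic (n m r : ℕ) : Type := PresentedGroup (metacyclicRels n m r)

instance (n m r : ℕ) : Group (Metacyclic n m r) :=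
  inferInstanceAs (Group (PresentedGroup (metacyclicRels n m r)))

/-- The generator `a` of `G_{n,m,r}`. -/
def aGen (n m r : ℕ) : Metacyclic n m r := PresentedGroup.of 0

/-- The generator `b` of `G_{n,m,r}`. -/
def bGen (n m r : ℕ) : Metacyclic n m r := PresentedGroup.of 1

/-- The submodule of `R^ι` of vectors vanishing at all coordinates satisfying `P`. -/
def coordZeroSubmodule (R : Type*) [Ring R] {ι : Type*} (P : ι → Prop) :
    Submodule R (ι → R) where
  carrier := {v | ∀ j, P j → v j = 0}
  zero_mem' := fun j _ => rfl
  add_mem' := by intro a b ha hb j hj; simp [ha j hj, hb j hj]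
  smul_mem' := by intro c v hv j hj; simp [hv j hj]

/-- Shortcut instance (port aid): `K`-algebra structure of an intermediate field, via
`IntermediateField.algebra'`; it only speeds up instance search under binders. -/
instance IntermediateField.algebraBaseShortcut {K L : Type*} [Field K] [Field L] [Algebra K L]
    (S : IntermediateField K L) : Algebra K S :=
  IntermediateField.algebra' S

namespace SkewGA

variable {R : Type*} [CommRing R] {K : Type*} [Field K] [Algebra R K]
variable {G : Type*} [Group G] [Fintype G] [DecidableEq G] (θ : G →* (K ≃ₐ[R] K))

lemma ofK_zero : ofK θ (0 : K) = 0 := by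
  funext g
  show (if g = 1 then (0:K) else 0) = 0
  split <;> rfl

lemma ofK_one : ofK θ (1 : K) = 1 := rfl

lemma ofK_mul (a b : K) : ofK θ (a * b) = ofK θ a * ofK θ b := by
  funext g
  rw [mul_def]
  rw [Finset.sum_eq_single 1]
  · show (if g = 1 then a * b else 0)
      = (if (1:G) = 1 then a else 0) * θ 1 (if (1:G)⁻¹ * g = 1 then b else 0)
    rw [if_pos rfl, inv_one, one_mul, map_one, AlgEquiv.one_apply]
    split <;> simp
  · intro h _ hh
    show (if h = 1 then a else 0) * _ = 0
    rw [if_neg hh, zero_mul]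
  · intro h; simp at h

lemma ofK_add (a b : K) : ofK θ (a + b) = ofK θ a + ofK θ b := by
  funext g
  show (if g = 1 then a + b else 0) = (if g = 1 then a else 0) + (if g = 1 then b else 0)
  split <;> simp

/-- `ofK` as an algebra homomorphism. -/
def ofKAlgHom : K →ₐ[R] SkewGA R K G θ where
  toFun := ofK θ
  map_one' := ofK_one θ
  map_mul' := ofK_mul θ
  map_zero' := ofK_zero θ
  map_add' := ofK_add θ
  commutes' := fun _ => rfl

@[simp] lemma ofKAlgHom_apply (a : K) : ofKAlgHom θ a = ofK θ a := rfl

end SkewGA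

lemma mem_coordZeroSubmodule {R : Type*} [Ring R] {ι : Type*} (P : ι → Prop) (v : ι → R) :
    v ∈ coordZeroSubmodule R P ↔ ∀ j, P j → v j = 0 := Iff.rfl

set_option maxHeartbeats 2000000 in
/-- **Proposition 6.** Let `gcd(q,n) = 1`, `r ≢ 1 (mod n)`,
`r^m ≡ 1 (mod n)`, let `g(x) ∣ xⁿ − 1` over `F_q` and `C = (F_qA)·g(a)` the cyclic code
it generates.  Then the induced metacyclic code `C^{G_{n,m,r}}` satisfies
`τ(C^G) = ⊕_i I_{s_i}(L_i)` with
`L_i = {(x⁽⁰⁾, …, x^{(s_i−1)}) : x⁽ʲ⁾ = 0 whenever g(α_i^{rʲ}) = 0}`. -/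
theorem induced_cyclic_code_decomposition
    (F : Type) [Field F] [Fintype F] (n m r : ℕ)
    (hn : 0 < n) (hm : 0 < m)
    (hq : Nat.Coprime n (Fintype.card F))
    (hrm : r ^ m ≡ 1 [MOD n]) (hr1 : ¬ r ≡ 1 [MOD n])
    (ω : ℕ) (f : Fin ω → F[X]) (s u k : Fin ω → ℕ) [∀ i, NeZero (u i)]
    (α : Fin ω → (X ^ n - 1 : F[X]).SplittingField)
    (hmonic : ∀ i, (f i).Monic) (hirr : ∀ i, Irreducible (f i))
    (hdvd : ∀ i, f i ∣ X ^ n - 1) (hroot : ∀ i, Polynomial.aeval (α i) (f i) = 0)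
    (hspos : ∀ i, 0 < s i) (hsdvd : ∀ i, s i ∣ m)
    (hstab : ∀ i, minpoly F (α i ^ r ^ s i) = f i)
    (hsmin : ∀ i, ∀ l, 0 < l → l < s i → minpoly F (α i ^ r ^ l) ≠ f i)
    (hu : ∀ i, s i * u i = m)
    (hrep : ∀ g : F[X], g.Monic → Irreducible g → g ∣ X ^ n - 1 →
      ∃! i : Fin ω, ∃ l : ℕ, g = minpoly F (α i ^ r ^ l))
    (θ : (i : Fin ω) → Multiplicative (ZMod (u i)) →* (F⟮α i⟯ ≃ₐ[F] F⟮α i⟯))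
    (hk : ∀ i, Fintype.card F ^ k i ≡ r ^ s i [MOD orderOf (α i)])
    (hθ : ∀ i (x : F⟮α i⟯),
      θ i (Multiplicative.ofAdd (1 : ZMod (u i))) x = x ^ Fintype.card F ^ k i)
    -- `τ` is the decomposition isomorphism of Theorem 1:
    (τ : MonoidAlgebra F (Metacyclic n m r) ≃ₐ[F]
      ((i : Fin ω) → Matrix (Fin (s i)) (Fin (s i))
        (SkewGA F F⟮α i⟯ (Multiplicative (ZMod (u i))) (θ i))))
    (hτa : ∀ i, τ (MonoidAlgebra.of F (Metacyclic n m r) (aGen n m r)) i =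
      Matrix.diagonal fun j : Fin (s i) =>
        SkewGA.ofK (θ i) (IntermediateField.AdjoinSimple.gen F (α i) ^ r ^ (j : ℕ)))
    (hτb : ∀ i, τ (MonoidAlgebra.of F (Metacyclic n m r) (bGen n m r)) i =
      Matrix.of fun j j' : Fin (s i) =>
        if (j : ℕ) + 1 = s i then
          (if (j' : ℕ) = 0 then SkewGA.ofG (θ i) (Multiplicative.ofAdd (1 : ZMod (u i)))
           else 0)
        else (if (j' : ℕ) = (j : ℕ) + 1 then 1 else 0))
    -- `g(x)` is a divisor of `xⁿ − 1`:
    (g : F[X]) (hg : g ∣ X ^ n - 1) :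
    ⇑τ '' ((Submodule.span (MonoidAlgebra F (Metacyclic n m r))
        {x : MonoidAlgebra F (Metacyclic n m r) | ∃ p : F[X],
          x = Polynomial.aeval (MonoidAlgebra.of F (Metacyclic n m r) (aGen n m r)) (p * g)}
        : Submodule (MonoidAlgebra F (Metacyclic n m r))
            (MonoidAlgebra F (Metacyclic n m r)))
        : Set (MonoidAlgebra F (Metacyclic n m r))) =
      {x | ∀ i (j : Fin (s i)), (fun j' => x i j j') ∈
        coordZeroSubmodule (SkewGA F F⟮α i⟯ (Multiplicative (ZMod (u i))) (θ i))
          (fun j' : Fin (s i) =>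
            Polynomial.aeval (α i ^ r ^ (j' : ℕ)) g = 0)} := by
  classical
  set A := MonoidAlgebra.of F (Metacyclic n m r) (aGen n m r) with hA
  set G0 := Polynomial.aeval A g with hG0def
  -- Step 1: the span of the generating set is the span of the single element `g(a)`.
  have hspan : Submodule.span (MonoidAlgebra F (Metacyclic n m r))
      {x : MonoidAlgebra F (Metacyclic n m r) | ∃ p : F[X],
        x = Polynomial.aeval A (p * g)}
      = Submodule.span (MonoidAlgebra F (Metacyclic n m r)) {G0} := by
    apply le_antisymm
    · rw [Submodule.span_le]
      rintro x ⟨p, rfl⟩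
      rw [map_mul, ← smul_eq_mul]
      exact Submodule.smul_mem _ _ (Submodule.mem_span_singleton_self _)
    · rw [Submodule.span_le, Set.singleton_subset_iff]
      exact Submodule.subset_span ⟨1, by rw [one_mul]⟩
  -- Step 2: compute `τ (g(a))` componentwise as a diagonal matrix.
  have hτG0 : ∀ i, τ G0 i = Matrix.diagonal (fun j : Fin (s i) =>
      SkewGA.ofK (θ i)
        (Polynomial.aeval (IntermediateField.AdjoinSimple.gen F (α i) ^ r ^ (j : ℕ)) g)) := by
    intro i
    have h1 : τ G0 i = Polynomial.aeval (τ A i) g := by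
      rw [hG0def]
      exact (Polynomial.aeval_algHom_apply
        ((Pi.evalAlgHom F _ i).comp τ.toAlgHom) A g).symm
    rw [h1, hτa i]
    set vv : Fin (s i) → SkewGA F F⟮α i⟯ (Multiplicative (ZMod (u i))) (θ i) :=
      fun j => SkewGA.ofK (θ i)
        (IntermediateField.AdjoinSimple.gen F (α i) ^ r ^ (j : ℕ)) with hvv
    calc Polynomial.aeval (Matrix.diagonal vv) g
        = Matrix.diagonal (Polynomial.aeval vv g) := by
          simpa using Polynomial.aeval_algHom_apply
            (Matrix.diagonalAlgHom (n := Fin (s i)) F) vv g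
      _ = Matrix.diagonal (fun j : Fin (s i) => SkewGA.ofK (θ i)
            (Polynomial.aeval
              (IntermediateField.AdjoinSimple.gen F (α i) ^ r ^ (j : ℕ)) g)) := by
          have hfun : Polynomial.aeval vv g = fun j : Fin (s i) =>
              SkewGA.ofK (θ i) (Polynomial.aeval
                (IntermediateField.AdjoinSimple.gen F (α i) ^ r ^ (j : ℕ)) g) := by
            funext j
            have e1 : Polynomial.aeval vv g j = Polynomial.aeval (vv j) g :=
              (Polynomial.aeval_algHom_apply (Pi.evalAlgHom F _ j) vv g).symm
            rw [e1]
            exact Polynomial.aeval_algHom_apply (SkewGA.ofKAlgHom (θ i)) _ g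
          rw [hfun]
  -- Step 3: the vanishing conditions in `F⟮α i⟯` and in the splitting field agree.
  have hzero : ∀ i (j' : Fin (s i)),
      Polynomial.aeval (IntermediateField.AdjoinSimple.gen F (α i) ^ r ^ (j' : ℕ)) g = 0
      ↔ Polynomial.aeval (α i ^ r ^ (j' : ℕ)) g = 0 := by
    intro i j'
    have hinj := (algebraMap F⟮α i⟯ (X ^ n - 1 : F[X]).SplittingField).injective
    have key := Polynomial.aeval_algHom_apply
      (IsScalarTower.toAlgHom F F⟮α i⟯ (X ^ n - 1 : F[X]).SplittingField)
      (IntermediateField.AdjoinSimple.gen F (α i) ^ r ^ (j' : ℕ)) g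
    rw [map_pow, IsScalarTower.coe_toAlgHom',
      IntermediateField.AdjoinSimple.algebraMap_gen] at key
    constructor
    · intro h0
      rw [key, h0, map_zero]
    · intro h0
      apply hinj
      rw [map_zero, ← key]
      exact h0
  -- Step 4: the set equality.
  rw [hspan]
  ext x
  simp only [Set.mem_image, SetLike.mem_coe, Set.mem_setOf_eq]
  constructor
  · rintro ⟨w, hw, rfl⟩
    rw [Submodule.mem_span_singleton] at hw
    obtain ⟨y, rfl⟩ := hw
    intro i j
    rw [mem_coordZeroSubmodule]
    intro j' hj'
    have h0 : Polynomial.aeval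
        (IntermediateField.AdjoinSimple.gen F (α i) ^ r ^ (j' : ℕ)) g = 0 :=
      (hzero i j').mpr hj'
    show τ (y • G0) i j j' = 0
    rw [smul_eq_mul, map_mul, Pi.mul_apply, hτG0 i, Matrix.mul_diagonal, h0,
      SkewGA.ofK_zero, mul_zero]
  · intro hx
    set y' : (i : Fin ω) → Matrix (Fin (s i)) (Fin (s i))
        (SkewGA F F⟮α i⟯ (Multiplicative (ZMod (u i))) (θ i)) :=
      fun i => Matrix.of fun j j' => x i j j' * SkewGA.ofK (θ i)
        ((Polynomial.aeval
          (IntermediateField.AdjoinSimple.gen F (α i) ^ r ^ (j' : ℕ)) g)⁻¹) with hy'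
    refine ⟨τ.symm y' • G0,
      Submodule.smul_mem _ _ (Submodule.mem_span_singleton_self _), ?_⟩
    rw [smul_eq_mul, map_mul, AlgEquiv.apply_symm_apply]
    funext i
    rw [Pi.mul_apply, hτG0 i]
    ext j j'
    rw [Matrix.mul_diagonal]
    show x i j j' * SkewGA.ofK (θ i)
        ((Polynomial.aeval
          (IntermediateField.AdjoinSimple.gen F (α i) ^ r ^ (j' : ℕ)) g)⁻¹)
        * SkewGA.ofK (θ i)
          (Polynomial.aeval
            (IntermediateField.AdjoinSimple.gen F (α i) ^ r ^ (j' : ℕ)) g)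
        = x i j j'
    by_cases hc : Polynomial.aeval
        (IntermediateField.AdjoinSimple.gen F (α i) ^ r ^ (j' : ℕ)) g = 0
    · have hx0 : x i j j' = 0 := (mem_coordZeroSubmodule _ _).mp (hx i j) j'
        ((hzero i j').mp hc)
      rw [hc, SkewGA.ofK_zero, mul_zero, hx0]
    · rw [mul_assoc, ← SkewGA.ofK_mul, inv_mul_cancel₀ hc, SkewGA.ofK_one, mul_one]
end
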